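/- arXiv:2401.00836 — 2 statements merged into one kernel-verified Lean document; each statement's English description precedes it below -/
import Mathlib

section
/- Let ν be an ergodic shift-invariant probability measure on the full shift Σ_α = {α_1,...,α_M,β}^ℤ. If ν({ζ : ζ_0 = β}) < 1/2, then ν(φ_α(B_α)) = 1, where φ_α(B_α) is the image in Σ_α of the set B_α of Dyck sequences in which every right bracket is closed. -/
open Filter

abbrev DyckAlphabet (M : ℕ) := Fin M ⊕ Fin M

def dyckValid (M : ℕ) : List (DyckAlphabet M) → List (Fin M) → Bool
  | [], _ => true
  | (Sum.inl i) :: rest, st => dyckValid M rest (i :: st)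
  | (Sum.inr j) :: rest, st =>
    match st with
    | [] => dyckValid M rest []
    | i :: s => if i = j then dyckValid M rest s else false

def dyckWord (M : ℕ) (ω : ℤ → DyckAlphabet M) (j : ℤ) (n : ℕ) : List (DyckAlphabet M) :=
  (List.range n).map fun t => ω (j + t)

def SigmaD (M : ℕ) : Set (ℤ → DyckAlphabet M) :=
  {ω | ∀ (j : ℤ) (n : ℕ), dyckValid M (dyckWord M ω j n) [] = true}

def dyckSgn (M : ℕ) : DyckAlphabet M → ℤ
  | Sum.inl _ => 1
  | Sum.inr _ => -1

def Hfun (M : ℕ) (ω : ℤ → DyckAlphabet M) (i : ℤ) : ℤ :=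
  if 0 ≤ i then ∑ j ∈ Finset.range i.toNat, dyckSgn M (ω j)
  else -∑ j ∈ Finset.range (-i).toNat, dyckSgn M (ω (i + j))

/-- The alphabet `{α_1, …, α_M, β}` of the full shift `Σ_α`. -/
abbrev AlphaAlphabet (M : ℕ) := Fin M ⊕ Unit

/-- `B_α ⊂ Σ_D`: sequences in which every right bracket is matched (closed) on the left. -/
def Balpha (M : ℕ) : Set (ℤ → DyckAlphabet M) :=
  SigmaD M ∩
    ⋂ i : ℤ, ⋃ k : Fin M,
      ({ω | ω i = Sum.inl k} ∪
        ({ω | ω i = Sum.inr k} ∩ ⋃ j : ℕ, {ω | Hfun M ω (i - j) = Hfun M ω (i + 1)}))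

/-- `φ_α : B_α → Σ_α`, replacing each `β_k` by the single symbol `β`. -/
def phiAlpha (M : ℕ) (ω : ℤ → DyckAlphabet M) : ℤ → AlphaAlphabet M := fun i =>
  match ω i with
  | Sum.inl k => Sum.inl k
  | Sum.inr _ => Sum.inr ()

/-- `+1` on `α_k`, `-1` on `β`. -/
def alphaSgn (M : ℕ) : AlphaAlphabet M → ℤ
  | Sum.inl _ => 1
  | Sum.inr _ => -1

/-- The height functions `H_{α,i}` on `Σ_α`. -/
def HfunAlpha (M : ℕ) (ζ : ℤ → AlphaAlphabet M) (i : ℤ) : ℤ :=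
  if 0 ≤ i then ∑ j ∈ Finset.range i.toNat, alphaSgn M (ζ j)
  else -∑ j ∈ Finset.range (-i).toNat, alphaSgn M (ζ (i + j))

def dyckShift {α : Type*} (ω : ℤ → α) : ℤ → α := fun i => ω (i + 1)

/-!
Read leftwards from position `0`, the height drops `H 1 - H (1 - n)` of a sequence `ζ` are the
Birkhoff sums of `ζ ↦ ±1` (the sign of `ζ 0`) under the inverse shift, whose mean
`1 - 2 ν{ζ 0 = β}` is positive. For an ergodic map, Birkhoff sums of a bounded observable with
positive mean are a.e. unbounded above; a truncated maximal inequality gives this directly.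
So a.e. `H` is unbounded below on every left half-line, and each `β` at position `i` has a last
position `p < i` with `H p < H i`. That position carries some `α_k`, and turning the `β` into
`β_k` produces a preimage in `B_α`, the bracket words being valid by a stack simulation.
-/

open MeasureTheory Topology Set

instance Sum.instDiscreteMeasurableSpace {α β : Type*} [MeasurableSpace α] [MeasurableSpace β]
    [DiscreteMeasurableSpace α] [DiscreteMeasurableSpace β] :
    DiscreteMeasurableSpace (α ⊕ β) :=
  ⟨fun _ => measurableSet_sum_iff.2 ⟨.of_discrete, .of_discrete⟩⟩

section BirkhoffSum

variable {X : Type*} {T : X → X} {F : X → ℝ}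

theorem bddAbove_birkhoffSum_apply_iff (T : X → X) (F : X → ℝ) (x : X) :
    BddAbove (range fun n => birkhoffSum T F n (T x)) ↔
      BddAbove (range fun n => birkhoffSum T F n x) := by
  simp only [bddAbove_def, forall_mem_range]
  constructor
  · rintro ⟨b, hb⟩
    refine ⟨max 0 (F x + b), fun n => ?_⟩
    cases n with
    | zero => simp
    | succ n =>
      rw [birkhoffSum_succ']
      exact le_max_of_le_right (by linarith [hb n])
  · rintro ⟨b, hb⟩
    refine ⟨b - F x, fun n => ?_⟩
    have := hb (n + 1)
    rw [birkhoffSum_succ'] at this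
    linarith

variable [MeasurableSpace X] {μ : Measure X}

theorem Measurable.birkhoffSum (hT : Measurable T) (hF : Measurable F) (n : ℕ) :
    Measurable (birkhoffSum T F n) :=
  Finset.measurable_sum _ fun k _ => hF.comp (hT.iterate k)

theorem measurableSet_exists_le_birkhoffSum (hT : Measurable T) (hF : Measurable F) (c : ℝ) :
    MeasurableSet {x | ∃ n, c ≤ birkhoffSum T F n x} := by
  rw [ofPred_exists]
  exact .iUnion fun n => measurableSet_le measurable_const (hT.birkhoffSum hF n)

/-- A truncated maximal-inequality argument: with `g = ⨆ n, min m (S_n F)`, one has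
`F - C · 1_{g = m} ≤ g - g ∘ T`, and the right-hand side integrates to zero. -/
theorem integral_le_mul_measureReal_exists_le_birkhoffSum [IsFiniteMeasure μ]
    (hT : MeasurePreserving T μ μ) (hF : Measurable F) (hFi : Integrable F μ) {C : ℝ}
    (hFC : ∀ x, F x ≤ C) (m : ℝ) :
    ∫ x, F x ∂μ ≤ C * μ.real {x | ∃ n, m ≤ birkhoffSum T F n x} := by
  set A := {x | ∃ n, m ≤ birkhoffSum T F n x}
  have hA : MeasurableSet A := measurableSet_exists_le_birkhoffSum hT.measurable hF m
  set g : X → ℝ := fun x => ⨆ n, min m (birkhoffSum T F n x)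
  have hbdd : ∀ x, BddAbove (range fun n => min m (birkhoffSum T F n x)) :=
    fun x => ⟨m, forall_mem_range.2 fun n => min_le_left _ _⟩
  have hg_le : ∀ x, g x ≤ m := fun x => ciSup_le fun n => min_le_left _ _
  have hg_ge : ∀ x, min m 0 ≤ g x := fun x => by
    simpa using le_ciSup (hbdd x) 0
  have hgm : Measurable g :=
    .iSup fun n => measurable_const.min (hT.measurable.birkhoffSum hF n)
  have hgi : Integrable g μ := Integrable.of_bound hgm.aestronglyMeasurable (|m|)
    (ae_of_all _ fun x => abs_le.2 ⟨(le_min (neg_abs_le m) (neg_nonpos.2 (abs_nonneg m))).trans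
      (hg_ge x), (hg_le x).trans (le_abs_self m)⟩)
  have hgTi : Integrable (fun x => g (T x)) μ := hT.integrable_comp_of_integrable hgi
  have key : ∀ x, F x - A.indicator (fun _ => C) x ≤ g x - g (T x) := by
    intro x
    by_cases hx : x ∈ A
    · obtain ⟨n, hn⟩ := id hx
      have hgx : g x = m := le_antisymm (hg_le x) (by simpa [hn] using le_ciSup (hbdd x) n)
      rw [indicator_of_mem hx, hgx]
      linarith [hFC x, hg_le (T x)]
    · have hx' : ∀ n, birkhoffSum T F n x < m := fun n => lt_of_not_ge fun h => hx ⟨n, h⟩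
      rw [indicator_of_notMem hx, sub_zero, le_sub_iff_add_le, add_comm,
        ← le_sub_iff_add_le]
      refine ciSup_le fun n => ?_
      have h := le_ciSup (hbdd x) (n + 1)
      rw [min_eq_right (hx' (n + 1)).le, birkhoffSum_succ'] at h
      linarith [min_le_right m (birkhoffSum T F n (T x))]
  have hgT : ∫ x, g (T x) ∂μ = ∫ x, g x ∂μ := by
    conv_rhs => rw [← hT.map_eq]
    exact (integral_map hT.measurable.aemeasurable hgm.aestronglyMeasurable).symm
  have := integral_mono (f := fun x => F x - A.indicator (fun _ => C) x)
    (g := fun x => g x - g (T x)) (hFi.sub ((integrable_const C).indicator hA)) (hgi.sub hgTi) key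
  rw [integral_sub hFi ((integrable_const C).indicator hA), integral_indicator_const C hA,
    integral_sub hgi hgTi, hgT, sub_self, smul_eq_mul] at this
  linarith

theorem Ergodic.ae_not_bddAbove_birkhoffSum [IsFiniteMeasure μ] (hT : Ergodic T μ)
    (hF : Measurable F) (hFi : Integrable F μ) {C : ℝ} (hFC : ∀ x, F x ≤ C)
    (hpos : 0 < ∫ x, F x ∂μ) :
    ∀ᵐ x ∂μ, ¬BddAbove (range fun n => birkhoffSum T F n x) := by
  set A : ℕ → Set X := fun m => {x | ∃ n, (m : ℝ) ≤ birkhoffSum T F n x}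
  set E := {x | ¬BddAbove (range fun n => birkhoffSum T F n x)}
  have hA : ∀ m, MeasurableSet (A m) := fun m =>
    measurableSet_exists_le_birkhoffSum hT.measurable hF m
  have hAE : ⋂ m, A m = E := by
    ext x
    simp only [A, E, mem_iInter, not_bddAbove_iff, exists_range_iff]
    refine ⟨fun h c => ?_, fun h m => let ⟨n, hn⟩ := h m; ⟨n, hn.le⟩⟩
    obtain ⟨n, hn⟩ := h (⌊c⌋₊ + 1)
    exact ⟨n, (Nat.lt_floor_add_one c).trans_le (by exact_mod_cast hn)⟩
  have hE : MeasurableSet E := hAE ▸ MeasurableSet.iInter hA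
  have hTE : T ⁻¹' E = E := by
    ext x
    exact not_congr (bddAbove_birkhoffSum_apply_iff T F x)
  have hlim : Tendsto (fun m => μ.real (A m)) atTop (𝓝 (μ.real E)) := by
    rw [← hAE]
    refine (ENNReal.tendsto_toReal (measure_ne_top μ _)).comp ?_
    refine tendsto_measure_iInter_atTop (fun m => (hA m).nullMeasurableSet)
      (fun a b hab x ⟨n, hn⟩ => ⟨n, le_trans (by exact_mod_cast hab) hn⟩)
      ⟨0, measure_ne_top μ _⟩
  have hle : ∫ x, F x ∂μ ≤ C * μ.real E :=
    ge_of_tendsto (tendsto_const_nhds.mul hlim) (Eventually.of_forall fun m =>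
      integral_le_mul_measureReal_exists_le_birkhoffSum hT.toMeasurePreserving hF hFi hFC m)
  have hE0 : μ E ≠ 0 := fun h => by
    simp [Measure.real, h] at hle
    linarith
  exact ae_iff.2 ((hT.measure_self_or_compl_eq_zero hE hTE).resolve_left hE0)

end BirkhoffSum

section Heights

variable {M : ℕ}

theorem HfunAlpha_natCast (ζ : ℤ → AlphaAlphabet M) (n : ℕ) :
    HfunAlpha M ζ n = ∑ j ∈ Finset.range n, alphaSgn M (ζ j) := by
  simp [HfunAlpha]

theorem HfunAlpha_neg_natCast (ζ : ℤ → AlphaAlphabet M) (n : ℕ) :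
    HfunAlpha M ζ (-n) = -∑ j ∈ Finset.range n, alphaSgn M (ζ (-n + j)) := by
  unfold HfunAlpha
  split_ifs with h
  · obtain rfl : n = 0 := by omega
    simp
  · simp

theorem HfunAlpha_add_one (ζ : ℤ → AlphaAlphabet M) (i : ℤ) :
    HfunAlpha M ζ (i + 1) = HfunAlpha M ζ i + alphaSgn M (ζ i) := by
  obtain ⟨n, rfl | rfl⟩ := Int.eq_nat_or_neg i
  · rw [← Nat.cast_succ, HfunAlpha_natCast, HfunAlpha_natCast, Finset.sum_range_succ]
  · cases n with
    | zero => simp [HfunAlpha]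
    | succ n =>
      rw [show -((n + 1 : ℕ) : ℤ) + 1 = -n by push_cast; ring, HfunAlpha_neg_natCast,
        HfunAlpha_neg_natCast, Finset.sum_range_succ']
      have hshift : ∀ k ∈ Finset.range n,
          alphaSgn M (ζ (-((n + 1 : ℕ) : ℤ) + (k + 1 : ℕ))) = alphaSgn M (ζ (-n + k)) :=
        fun k _ => by congr 2; push_cast; ring
      rw [Finset.sum_congr rfl hshift, Nat.cast_zero, add_zero]
      ring

theorem dyckSgn_eq_alphaSgn_phiAlpha (ω : ℤ → DyckAlphabet M) (i : ℤ) :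
    dyckSgn M (ω i) = alphaSgn M (phiAlpha M ω i) := by
  unfold phiAlpha
  rcases ω i with k | k <;> rfl

theorem Hfun_eq_HfunAlpha_phiAlpha (ω : ℤ → DyckAlphabet M) :
    Hfun M ω = HfunAlpha M (phiAlpha M ω) := by
  funext i
  simp only [Hfun, HfunAlpha, dyckSgn_eq_alphaSgn_phiAlpha]

theorem Hfun_add_one (ω : ℤ → DyckAlphabet M) (i : ℤ) :
    Hfun M ω (i + 1) = Hfun M ω i + dyckSgn M (ω i) := by
  rw [Hfun_eq_HfunAlpha_phiAlpha, HfunAlpha_add_one, dyckSgn_eq_alphaSgn_phiAlpha]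

end Heights

theorem dyckWord_succ {M : ℕ} (ω : ℤ → DyckAlphabet M) (j : ℤ) (n : ℕ) :
    dyckWord M ω j (n + 1) = ω j :: dyckWord M ω (j + 1) n := by
  simp [dyckWord, ← List.map_eq_flatMap, List.range_succ_eq_map, add_assoc, add_comm (1 : ℤ)]

section Dyck

variable {M : ℕ}

/-- The stack of `dyckValid` run on `ω a, …, ω (a + m - 1)`, holding positions instead of
bracket types. -/
def openBrackets (ω : ℤ → DyckAlphabet M) (a : ℤ) : ℕ → List ℤ
  | 0 => []
  | m + 1 =>
    match ω (a + m) with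
    | .inl _ => (a + m) :: openBrackets ω a m
    | .inr _ => (openBrackets ω a m).tail

theorem openBrackets_getElem (ω : ℤ → DyckAlphabet M) (a : ℤ) (m j : ℕ)
    (hj : j < (openBrackets ω a m).length) :
    (openBrackets ω a m)[j] < a + m ∧ (∃ k, ω (openBrackets ω a m)[j] = .inl k) ∧
      Hfun M ω (openBrackets ω a m)[j] + (j + 1) = Hfun M ω (a + m) ∧
      ∀ z, (openBrackets ω a m)[j] < z → z ≤ a + m →
        Hfun M ω (openBrackets ω a m)[j] < Hfun M ω z := by
  induction m generalizing j with
  | zero => simp [openBrackets] at hj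
  | succ m ih =>
    have hstep := Hfun_add_one ω (a + m)
    rw [Nat.cast_succ, ← add_assoc]
    rcases hω : ω (a + m) with k | k
    · have hpush : openBrackets ω a (m + 1) = (a + m) :: openBrackets ω a m := by
        simp [openBrackets, hω]
      simp only [hpush]
      rw [hω] at hstep
      cases j with
      | zero =>
        refine ⟨by simp, ⟨k, by simpa using hω⟩, by simpa [dyckSgn] using hstep.symm, ?_⟩
        intro z hz hz'
        obtain rfl : z = a + m + 1 := by simp at hz; omega
        simp [hstep, dyckSgn]
      | succ j =>
        simp only [List.getElem_cons_succ]
        have hj' : j < (openBrackets ω a m).length := by simpa [hpush] using hj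
        obtain ⟨hlt, hinl, hH, hz⟩ := ih j hj'
        refine ⟨by omega, hinl, by simp [dyckSgn] at hstep; push_cast; omega, fun z h1 h2 => ?_⟩
        rcases (show z ≤ a + m ∨ z = a + m + 1 by omega) with h | rfl
        · exact hz z h1 h
        · simp [dyckSgn] at hstep; omega
    · have hpop : openBrackets ω a (m + 1) = (openBrackets ω a m).tail := by
        simp [openBrackets, hω]
      simp only [hpop, List.getElem_tail]
      have hj' : j + 1 < (openBrackets ω a m).length := by simp [hpop] at hj; omega
      obtain ⟨hlt, hinl, hH, hz⟩ := ih (j + 1) hj'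
      rw [hω] at hstep
      simp only [dyckSgn] at hstep
      refine ⟨by omega, hinl, by push_cast at hH; omega, fun z h1 h2 => ?_⟩
      rcases (show z ≤ a + m ∨ z = a + m + 1 by omega) with h | rfl
      · exact hz z h1 h
      · push_cast at hH; omega

def BracketTypesMatch (ω : ℤ → DyckAlphabet M) : Prop :=
  ∀ p i k l, p < i → ω p = .inl k → ω i = .inr l → Hfun M ω i = Hfun M ω p + 1 →
    (∀ z, p < z → z ≤ i → Hfun M ω p < Hfun M ω z) → k = l

variable {ω : ℤ → DyckAlphabet M}

theorem dyckValid_dyckWord_openBrackets (hmatch : BracketTypesMatch ω) (a : ℤ) (n m : ℕ) :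
    dyckValid M (dyckWord M ω (a + m) n) ((openBrackets ω a m).map fun p => (ω p).elim id id) =
      true := by
  induction n generalizing m with
  | zero => simp [dyckWord, dyckValid]
  | succ n ih =>
    have ih' := ih (m + 1)
    rw [Nat.cast_succ, ← add_assoc] at ih'
    rw [dyckWord_succ]
    rcases hω : ω (a + m) with k | k
    · simpa [dyckValid, openBrackets, hω] using ih'
    · rcases hstack : openBrackets ω a m with _ | ⟨p, rest⟩
      · simpa [dyckValid, openBrackets, hω, hstack] using ih'
      · have hp := openBrackets_getElem ω a m 0 (by simp [hstack])
        simp only [hstack, List.getElem_cons_zero, Nat.cast_zero, zero_add] at hp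
        obtain ⟨hlt, ⟨k', hk'⟩, hH, hz⟩ := hp
        have hkk' : k' = k := hmatch p (a + m) k' k hlt hk' hω hH.symm hz
        simpa [dyckValid, openBrackets, hω, hstack, hk', hkk'] using ih'

theorem mem_SigmaD_of_bracketTypesMatch (hmatch : BracketTypesMatch ω) : ω ∈ SigmaD M :=
  fun j n => by
    simpa [openBrackets] using dyckValid_dyckWord_openBrackets hmatch j n 0

end Dyck

section Matching

variable {M : ℕ}

theorem exists_greatest_lt_HfunAlpha (ζ : ℤ → AlphaAlphabet M) (i : ℤ)
    (h : ∃ k < i, HfunAlpha M ζ k < HfunAlpha M ζ i) :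
    ∃ p k, p < i ∧ ζ p = .inl k ∧ HfunAlpha M ζ i = HfunAlpha M ζ p + 1 ∧
      ∀ z < i, HfunAlpha M ζ z < HfunAlpha M ζ i → z ≤ p := by
  obtain ⟨p, ⟨hpi, hpH⟩, hmax⟩ := Int.exists_greatest_of_bdd ⟨i, fun z hz => hz.1.le⟩ h
  have hnext : HfunAlpha M ζ i ≤ HfunAlpha M ζ (p + 1) := by
    rcases (show p + 1 = i ∨ p + 1 < i by omega) with h | h
    · rw [h]
    · exact not_lt.1 fun hlt => by have := hmax (p + 1) ⟨h, hlt⟩; omega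
  rw [HfunAlpha_add_one] at hnext
  rcases hζ : ζ p with k | u
  · rw [hζ] at hnext
    simp only [alphaSgn] at hnext
    exact ⟨p, k, hpi, hζ, by omega, fun z hz hzH => hmax z ⟨hz, hzH⟩⟩
  · rw [hζ] at hnext
    simp [alphaSgn] at hnext
    omega

theorem mem_image_phiAlpha_Balpha_of_forall_exists_lt (ζ : ℤ → AlphaAlphabet M)
    (h : ∀ i c, ∃ k < i, HfunAlpha M ζ k < c) : ζ ∈ phiAlpha M '' Balpha M := by
  choose q κ hq_lt hq_ζ hq_H hq_max using
    fun i => exists_greatest_lt_HfunAlpha ζ i (h i (HfunAlpha M ζ i))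
  set ω : ℤ → DyckAlphabet M := fun i =>
    match ζ i with
    | .inl k => .inl k
    | .inr _ => .inr (κ i)
  have hφ : phiAlpha M ω = ζ := by
    funext i
    simp only [phiAlpha, ω]
    rcases ζ i with k | ⟨⟩ <;> rfl
  have hH : Hfun M ω = HfunAlpha M ζ := hφ ▸ Hfun_eq_HfunAlpha_phiAlpha ω
  have hω_inr : ∀ i k, ω i = .inr k → ζ i = .inr () ∧ k = κ i := by
    intro i k hi
    simp only [ω] at hi
    rcases hζ : ζ i with k' | ⟨⟩ <;> simp [hζ] at hi
    exact ⟨rfl, hi.symm⟩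
  refine ⟨ω, ⟨mem_SigmaD_of_bracketTypesMatch ?_, ?_⟩, hφ⟩
  · intro p i k l hpi hp hi hHi hz
    obtain ⟨-, rfl⟩ := hω_inr i l hi
    rw [hH] at hHi hz
    have hpq : p = q i := by
      refine le_antisymm (hq_max i p hpi (by omega)) (not_lt.1 fun hlt => ?_)
      have := hz (q i) hlt (hq_lt i).le
      have := hq_H i
      omega
    subst hpq
    simp only [ω, hq_ζ, Sum.inl.injEq] at hp
    exact hp.symm
  · refine mem_iInter.2 fun i => mem_iUnion.2 ?_
    rcases hζ : ζ i with k | ⟨⟩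
    · exact ⟨k, Or.inl (by simp [ω, hζ])⟩
    · refine ⟨κ i, Or.inr ⟨by simp [ω, hζ], mem_iUnion.2 ⟨(i - q i).toNat, ?_⟩⟩⟩
      have := hq_lt i
      simp only [mem_ofPred_eq, hH, show i - ((i - q i).toNat : ℤ) = q i by omega,
        HfunAlpha_add_one, hζ, hq_H i, alphaSgn]
      ring

end Matching

theorem Int.exists_lt_lt_of_not_bddAbove_sub {H : ℤ → ℤ} {a : ℤ}
    (h : ¬BddAbove (Set.range fun n : ℕ => H a - H (a - n))) (i c : ℤ) :
    ∃ k < i, H k < c := by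
  obtain ⟨b, hb⟩ := ((finite_Icc i a).image H).bddBelow
  obtain ⟨-, ⟨n, rfl⟩, hn⟩ := not_bddAbove_iff.1 h (H a - min c b)
  dsimp only at hn
  refine ⟨a - n, not_le.1 fun hi => ?_, by omega⟩
  have := hb (mem_image_of_mem H ⟨hi, by omega⟩)
  omega

def dyckShiftEquiv (α : Type*) [MeasurableSpace α] : (ℤ → α) ≃ᵐ (ℤ → α) where
  toFun := dyckShift
  invFun ζ i := ζ (i - 1)
  left_inv ζ := by funext i; simp [dyckShift]
  right_inv ζ := by funext i; simp [dyckShift]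
  measurable_toFun := measurable_pi_lambda _ fun i => measurable_pi_apply (i + 1)
  measurable_invFun := measurable_pi_lambda _ fun i => measurable_pi_apply (i - 1)

theorem dyckShiftEquiv_symm_iterate_apply {α : Type*} [MeasurableSpace α] (n : ℕ)
    (ζ : ℤ → α) (i : ℤ) : (dyckShiftEquiv α).symm^[n] ζ i = ζ (i - n) := by
  induction n generalizing i with
  | zero => simp
  | succ n ih =>
    rw [Function.iterate_succ_apply']
    change (_ : ℤ → α) (i - 1) = _
    rw [ih]
    congr 1
    push_cast
    ring

section AlphaShift

variable {M : ℕ}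

theorem birkhoffSum_dyckShiftEquiv_symm_alphaSgn (ζ : ℤ → AlphaAlphabet M) (n : ℕ) :
    birkhoffSum (dyckShiftEquiv _).symm (fun ζ => (alphaSgn M (ζ 0) : ℝ)) n ζ =
      ((HfunAlpha M ζ 1 - HfunAlpha M ζ (1 - n) : ℤ) : ℝ) := by
  induction n with
  | zero => simp
  | succ n ih =>
    rw [birkhoffSum_succ, ih, dyckShiftEquiv_symm_iterate_apply,
      show (1 : ℤ) - n = -n + 1 by ring, HfunAlpha_add_one]
    push_cast
    ring_nf

theorem abs_alphaSgn (a : AlphaAlphabet M) : |(alphaSgn M a : ℝ)| = 1 := by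
  rcases a with k | u <;> simp [alphaSgn]

theorem integral_alphaSgn_apply_zero (ν : Measure (ℤ → AlphaAlphabet M))
    [IsProbabilityMeasure ν] :
    ∫ ζ, (alphaSgn M (ζ 0) : ℝ) ∂ν = 1 - 2 * ν.real {ζ | ζ 0 = .inr ()} := by
  have hS : MeasurableSet {ζ : ℤ → AlphaAlphabet M | ζ 0 = .inr ()} :=
    measurableSet_eq_fun (measurable_pi_apply 0) measurable_const
  have h : (fun ζ : ℤ → AlphaAlphabet M => (alphaSgn M (ζ 0) : ℝ)) =
      fun ζ => 1 - 2 * {ζ | ζ 0 = .inr ()}.indicator 1 ζ := by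
    funext ζ
    rcases hζ : ζ 0 with k | ⟨⟩ <;> simp [alphaSgn, hζ, indicator]
    norm_num
  rw [h, integral_sub (integrable_const 1) (((integrable_const 1).indicator hS).const_mul 2),
    integral_const_mul, integral_indicator_one hS]
  simp

end AlphaShift

open MeasureTheory in
theorem measure_image_Balpha_eq_one_general (M : ℕ)
    (ν : Measure (ℤ → AlphaAlphabet M)) [IsProbabilityMeasure ν]
    (herg : Ergodic (dyckShift (α := AlphaAlphabet M)) ν)
    (hβ : ν {ζ | ζ 0 = Sum.inr ()} < 1 / 2) :
    ν (phiAlpha M '' Balpha M) = 1 := by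
  set F : (ℤ → AlphaAlphabet M) → ℝ := fun ζ => alphaSgn M (ζ 0)
  have hF : Measurable F :=
    (Measurable.of_discrete (f := fun a => (alphaSgn M a : ℝ))).comp (measurable_pi_apply 0)
  have hFi : Integrable F ν :=
    .of_bound hF.aestronglyMeasurable 1 (ae_of_all _ fun ζ => (abs_alphaSgn _).le)
  have hpos : 0 < ∫ ζ, F ζ ∂ν := by
    have : ν.real {ζ | ζ 0 = .inr ()} < 1 / 2 :=
      ENNReal.toReal_lt_of_lt_ofReal (by simpa using hβ)
    rw [integral_alphaSgn_apply_zero]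
    linarith
  have hunbdd := (Ergodic.symm (e := dyckShiftEquiv _) herg).ae_not_bddAbove_birkhoffSum hF hFi
    (fun ζ => le_of_abs_le (abs_alphaSgn _).le) hpos
  rw [← measure_univ (μ := ν)]
  refine measure_congr (ae_eq_univ.2 (mem_ae_iff.1 (hunbdd.mono fun ζ hζ => ?_)))
  refine mem_image_phiAlpha_Balpha_of_forall_exists_lt ζ
    (Int.exists_lt_lt_of_not_bddAbove_sub (a := 1) fun hbdd => ?_)
  refine hζ ((Int.cast_mono.map_bddAbove hbdd).mono ?_)
  rintro _ ⟨n, rfl⟩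
  exact ⟨_, ⟨n, rfl⟩, (birkhoffSum_dyckShiftEquiv_symm_alphaSgn ζ n).symm⟩

open MeasureTheory in
/-- if `ν` is an ergodic shift-invariant probability measure on the full
shift `Σ_α = {α_1,…,α_M,β}^ℤ` with `ν({ζ : ζ_0 = β}) < 1/2`, then `ν(φ_α(B_α)) = 1`. -/
theorem measure_image_Balpha_eq_one (M : ℕ) (hM : 2 ≤ M)
    (ν : Measure (ℤ → AlphaAlphabet M)) [IsProbabilityMeasure ν]
    (herg : Ergodic (dyckShift (α := AlphaAlphabet M)) ν)
    (hβ : ν {ζ | ζ 0 = Sum.inr ()} < 1 / 2) :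
    ν (phiAlpha M '' Balpha M) = 1 :=
  measure_image_Balpha_eq_one_general M ν herg hβ
end

section
/- Let μ and ν be f_{a,b}-invariant Borel probability measures on [0,1]³ whose pushforwards under the projection p(x_u,x_c,x_s) = (x_u,x_c) coincide. Then μ = ν. Consequently, the projection p_* is injective on the set of f_{a,b}-invariant measures. -/
open MeasureTheory Metric

noncomputable def faMap (M : ℕ) (a : ℝ) (p : ℝ × ℝ) : ℝ × ℝ :=
  if p.1 < M * a then
    (Int.fract (p.1 / a), p.2 / M + (⌊p.1 / a⌋ : ℝ) / M)
  else
    ((p.1 - M * a) / (1 - M * a), if p.2 = 1 then 1 else Int.fract (M * p.2))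

noncomputable def fabMap (M : ℕ) (a b : ℝ) (p : ℝ × ℝ × ℝ) : ℝ × ℝ × ℝ :=
  let q := faMap M a (p.1, p.2.1)
  if p.1 < M * a then
    (q.1, q.2, (1 - M * b) * p.2.2)
  else
    (q.1, q.2, b * p.2.2 + 1 +
      b * ((if p.2.1 = 1 then (M : ℝ) else (⌊(M : ℝ) * p.2.1⌋ : ℝ) + 1) - M - 1))

/-- The projection `p(x_u,x_c,x_s) = (x_u,x_c)`. -/
def projMap (x : ℝ × ℝ × ℝ) : ℝ × ℝ := (x.1, x.2.1)

lemma measurable_faMap (M : ℕ) (a : ℝ) : Measurable (faMap M a) := by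
  unfold faMap
  have hfl : Measurable fun p : ℝ × ℝ => ((⌊p.1 / a⌋ : ℝ)) := by
    simp only [← Int.self_sub_fract]
    exact (measurable_fst.div_const a).sub (measurable_fst.div_const a).fract
  refine Measurable.ite (measurableSet_lt measurable_fst measurable_const) ?_ ?_
  · exact ((measurable_fst.div_const a).fract).prodMk
      ((measurable_snd.div_const _).add (hfl.div_const _))
  · refine ((measurable_fst.sub_const _).div_const _).prodMk ?_
    refine Measurable.ite (measurable_snd (measurableSet_singleton (1:ℝ))) measurable_const ?_
    exact (measurable_snd.const_mul _).fract

lemma measurable_fabMap (M : ℕ) (a b : ℝ) : Measurable (fabMap M a b) := by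
  unfold fabMap
  have hq : Measurable fun p : ℝ × ℝ × ℝ => faMap M a (p.1, p.2.1) :=
    (measurable_faMap M a).comp (measurable_fst.prodMk (measurable_snd.fst))
  have hfl : Measurable fun p : ℝ × ℝ × ℝ => ((⌊(M:ℝ) * p.2.1⌋ : ℝ)) := by
    simp only [← Int.self_sub_fract]
    exact (measurable_snd.fst.const_mul _).sub (measurable_snd.fst.const_mul _).fract
  refine Measurable.ite (measurableSet_lt measurable_fst measurable_const) ?_ ?_
  · exact (hq.fst).prodMk ((hq.snd).prodMk (measurable_snd.snd.const_mul _))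
  · refine (hq.fst).prodMk ((hq.snd).prodMk ?_)
    have hif : Measurable fun p : ℝ × ℝ × ℝ =>
        (if p.2.1 = 1 then (M : ℝ) else (⌊(M : ℝ) * p.2.1⌋ : ℝ) + 1) := by
      refine Measurable.ite ?_ measurable_const (hfl.add_const _)
      exact measurable_snd.fst (measurableSet_singleton (1:ℝ))
    exact ((measurable_snd.snd.const_mul b).add_const 1).add ((hif.sub_const _).sub_const _|>.const_mul b)

lemma fab_step (M : ℕ) (a b : ℝ) (hb0 : 0 ≤ b) (hb1 : (M:ℝ) * b ≤ 1)
    (x y : ℝ × ℝ × ℝ) (h1 : x.1 = y.1) (h2 : x.2.1 = y.2.1) :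
    (fabMap M a b x).1 = (fabMap M a b y).1 ∧ (fabMap M a b x).2.1 = (fabMap M a b y).2.1 ∧
      |(fabMap M a b x).2.2 - (fabMap M a b y).2.2| ≤
        max b (1 - M * b) * |x.2.2 - y.2.2| := by
  by_cases hc : y.1 < M * a
  · simp only [fabMap, faMap, h1, h2, hc, if_pos]
    refine ⟨trivial, trivial, ?_⟩
    rw [← mul_sub, abs_mul, abs_of_nonneg (by linarith : (0:ℝ) ≤ 1 - M * b)]
    exact mul_le_mul_of_nonneg_right (le_max_right _ _) (abs_nonneg _)
  · simp only [fabMap, faMap, h1, h2, hc, if_neg, not_false_iff]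
    refine ⟨trivial, trivial, ?_⟩
    have : b * x.2.2 + 1 + b * ((if y.2.1 = 1 then (M : ℝ) else (⌊(M : ℝ) * y.2.1⌋ : ℝ) + 1) - M - 1)
        - (b * y.2.2 + 1 + b * ((if y.2.1 = 1 then (M : ℝ) else (⌊(M : ℝ) * y.2.1⌋ : ℝ) + 1) - M - 1))
        = b * (x.2.2 - y.2.2) := by ring
    rw [this, abs_mul, abs_of_nonneg hb0]
    exact mul_le_mul_of_nonneg_right (le_max_left _ _) (abs_nonneg _)

lemma fab_iter (M : ℕ) (a b : ℝ) (hb0 : 0 ≤ b) (hb1 : (M:ℝ) * b ≤ 1)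
    (n : ℕ) (x y : ℝ × ℝ × ℝ) (h1 : x.1 = y.1) (h2 : x.2.1 = y.2.1) :
    ((fabMap M a b)^[n] x).1 = ((fabMap M a b)^[n] y).1 ∧
    ((fabMap M a b)^[n] x).2.1 = ((fabMap M a b)^[n] y).2.1 ∧
      |((fabMap M a b)^[n] x).2.2 - ((fabMap M a b)^[n] y).2.2| ≤
        (max b (1 - M * b)) ^ n * |x.2.2 - y.2.2| := by
  induction n with
  | zero => exact ⟨h1, h2, by simp⟩
  | succ n ih =>
    obtain ⟨ih1, ih2, ih3⟩ := ih
    simp only [Function.iterate_succ_apply']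
    obtain ⟨s1, s2, s3⟩ := fab_step M a b hb0 hb1 _ _ ih1 ih2
    refine ⟨s1, s2, s3.trans ?_⟩
    rw [pow_succ, mul_comm ((max b (1 - M * b)) ^ n), mul_assoc]
    exact mul_le_mul_of_nonneg_left ih3 (le_trans hb0 (le_max_left _ _))

lemma key_integral (M : ℕ) (a b : ℝ) (hM : 2 ≤ M) (ha : a ∈ Set.Ioo (0 : ℝ) (1 / M)) (hb : b ∈ Set.Ioo (0 : ℝ) (1 / M))
    (μ ν : Measure (ℝ × ℝ × ℝ)) [IsProbabilityMeasure μ] [IsProbabilityMeasure ν]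
    (hμcube : μ (Set.Icc 0 1 ×ˢ Set.Icc 0 1 ×ˢ Set.Icc (0:ℝ) 1) = 1)
    (hνcube : ν (Set.Icc 0 1 ×ˢ Set.Icc 0 1 ×ˢ Set.Icc (0:ℝ) 1) = 1)
    (hμinv : μ.map (fabMap M a b) = μ) (hνinv : ν.map (fabMap M a b) = ν)
    (hproj : μ.map projMap = ν.map projMap)
    (φ : ℝ × ℝ × ℝ → ℝ) (L C : ℝ) (hL : 0 ≤ L)
    (hlip : ∀ x y, |φ x - φ y| ≤ L * dist x y) (hbd : ∀ x, |φ x| ≤ C)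
    (hcont : Continuous φ) :
    ∫ x, φ x ∂μ = ∫ x, φ x ∂ν := by
  set f := fabMap M a b with hf
  set lam := max b (1 - M * b) with hlam
  have hM0 : (0:ℝ) < M := by exact_mod_cast Nat.pos_of_ne_zero (by omega)
  have hMb : (M:ℝ) * b < 1 := by
    calc (M:ℝ) * b < M * (1/M) := mul_lt_mul_of_pos_left hb.2 hM0
    _ = 1 := by field_simp
  have hMb0 : 0 < (M:ℝ) * b := mul_pos hM0 hb.1
  have hb1 : b < 1 := hb.2.trans_le (by rw [div_le_one hM0]; exact_mod_cast (by omega : 1 ≤ M))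
  have hlam0 : 0 ≤ lam := le_trans hb.1.le (le_max_left _ _)
  have hlam1 : lam < 1 := max_lt hb1 (by linarith)
  have hfm : Measurable f := measurable_fabMap M a b
  have hfnm : ∀ n : ℕ, Measurable f^[n] := fun n => hfm.iterate n
  have hpm : Measurable projMap := measurable_fst.prodMk measurable_snd.fst
  -- iterated invariance
  have hinvn : ∀ (ρ : Measure (ℝ × ℝ × ℝ)), ρ.map f = ρ → ∀ n : ℕ, ρ.map f^[n] = ρ := by
    intro ρ hρ n
    induction n with
    | zero => simp [Measure.map_id]
    | succ n ih =>
      rw [Function.iterate_succ, ← Measure.map_map (hfnm n) hfm, hρ, ih]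
  -- integrability of bounded measurable functions
  have hint : ∀ (ρ : Measure (ℝ × ℝ × ℝ)) [IsProbabilityMeasure ρ] (h : ℝ × ℝ × ℝ → ℝ),
      Measurable h → (∀ x, |h x| ≤ C) → Integrable h ρ := by
    intro ρ _ h hm hbdd
    exact (integrable_const C).mono' hm.aestronglyMeasurable
      (Filter.Eventually.of_forall fun x => by simpa [Real.norm_eq_abs] using hbdd x)
  -- invariance integral identity
  have hinv_int : ∀ (ρ : Measure (ℝ × ℝ × ℝ)), ρ.map f = ρ → ∀ n : ℕ,
      ∫ x, φ x ∂ρ = ∫ x, φ (f^[n] x) ∂ρ := by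
    intro ρ hρ n
    conv_lhs => rw [← hinvn ρ hρ n]
    exact integral_map (hfnm n).aemeasurable hcont.aestronglyMeasurable
  -- the r-integrals agree
  have hproj_int : ∀ n : ℕ,
      ∫ x, φ (f^[n] (x.1, x.2.1, 0)) ∂μ = ∫ x, φ (f^[n] (x.1, x.2.1, 0)) ∂ν := by
    intro n
    have hg : Measurable fun q : ℝ × ℝ => φ (f^[n] (q.1, q.2, 0)) :=
      hcont.measurable.comp ((hfnm n).comp
        (measurable_fst.prodMk (measurable_snd.prodMk measurable_const)))
    have h1 : ∫ x, φ (f^[n] (x.1, x.2.1, 0)) ∂μ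
        = ∫ q, φ (f^[n] (q.1, q.2, 0)) ∂(μ.map projMap) :=
      (integral_map hpm.aemeasurable hg.aestronglyMeasurable).symm
    have h2 : ∫ x, φ (f^[n] (x.1, x.2.1, 0)) ∂ν
        = ∫ q, φ (f^[n] (q.1, q.2, 0)) ∂(ν.map projMap) :=
      (integral_map hpm.aemeasurable hg.aestronglyMeasurable).symm
    rw [h1, h2, hproj]
  -- pointwise bound on the cube
  set cube := Set.Icc (0:ℝ) 1 ×ˢ Set.Icc (0:ℝ) 1 ×ˢ Set.Icc (0:ℝ) 1 with hcube
  have hcubem : MeasurableSet cube :=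
    measurableSet_Icc.prod (measurableSet_Icc.prod measurableSet_Icc)
  have hptwise : ∀ n : ℕ, ∀ x ∈ cube, |φ (f^[n] x) - φ (f^[n] (x.1, x.2.1, 0))| ≤ L * lam ^ n := by
    intro n x hx
    obtain ⟨e1, e2, e3⟩ := fab_iter M a b hb.1.le hMb.le n x (x.1, x.2.1, 0) rfl rfl
    have hx3 : |x.2.2 - 0| ≤ 1 := by
      rw [sub_zero, abs_of_nonneg hx.2.2.1]; exact hx.2.2.2
    have hdist : dist (f^[n] x) (f^[n] (x.1, x.2.1, 0))
        ≤ |((f^[n] x)).2.2 - ((f^[n] (x.1, x.2.1, 0))).2.2| := by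
      rw [Prod.dist_eq, Prod.dist_eq, e1, e2, dist_self, dist_self, Real.dist_eq]
      exact max_le (abs_nonneg _) (max_le (abs_nonneg _) le_rfl)
    calc |φ (f^[n] x) - φ (f^[n] (x.1, x.2.1, 0))| ≤ L * dist (f^[n] x) (f^[n] (x.1, x.2.1, 0)) :=
          hlip _ _
      _ ≤ L * |((f^[n] x)).2.2 - ((f^[n] (x.1, x.2.1, 0))).2.2| :=
          mul_le_mul_of_nonneg_left hdist hL
      _ ≤ L * (lam ^ n * |x.2.2 - 0|) := mul_le_mul_of_nonneg_left e3 hL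
      _ ≤ L * (lam ^ n * 1) := by
          apply mul_le_mul_of_nonneg_left _ hL
          exact mul_le_mul_of_nonneg_left hx3 (pow_nonneg hlam0 n)
      _ = L * lam ^ n := by ring
  -- a.e. bound and gap estimate
  have hgap : ∀ (ρ : Measure (ℝ × ℝ × ℝ)) [IsProbabilityMeasure ρ], ρ cube = 1 → ∀ n : ℕ,
      |∫ x, φ (f^[n] x) ∂ρ - ∫ x, φ (f^[n] (x.1, x.2.1, 0)) ∂ρ| ≤ L * lam ^ n := by
    intro ρ _ hρc n
    have hae : ∀ᵐ x ∂ρ, x ∈ cube := by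
      rw [MeasureTheory.ae_iff]
      have : {x : ℝ × ℝ × ℝ | ¬ x ∈ cube} = cubeᶜ := rfl
      rw [this, measure_compl hcubem (measure_ne_top _ _), hρc, measure_univ, tsub_self]
    have hi1 : Integrable (fun x => φ (f^[n] x)) ρ :=
      hint ρ _ (hcont.measurable.comp (hfnm n)) (fun x => hbd _)
    have hi2 : Integrable (fun x => φ (f^[n] (x.1, x.2.1, 0))) ρ :=
      hint ρ _ (hcont.measurable.comp ((hfnm n).comp
        (measurable_fst.prodMk (measurable_snd.fst.prodMk measurable_const)))) (fun x => hbd _)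
    rw [← integral_sub hi1 hi2]
    have := norm_integral_le_of_norm_le_const (μ := ρ)
      (f := fun x => φ (f^[n] x) - φ (f^[n] (x.1, x.2.1, 0))) (C := L * lam ^ n)
      (hae.mono fun x hx => by simpa [Real.norm_eq_abs] using hptwise n x hx)
    simpa [Real.norm_eq_abs, measure_univ] using this
  -- conclude
  have hbound : ∀ n : ℕ, |∫ x, φ x ∂μ - ∫ x, φ x ∂ν| ≤ 2 * L * lam ^ n := by
    intro n
    have e1 := hinv_int μ hμinv n
    have e2 := hinv_int ν hνinv n
    have g1 := hgap μ hμcube n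
    have g2 := hgap ν hνcube n
    have e3 := hproj_int n
    calc |∫ x, φ x ∂μ - ∫ x, φ x ∂ν|
        = |(∫ x, φ (f^[n] x) ∂μ - ∫ x, φ (f^[n] (x.1, x.2.1, 0)) ∂μ)
            - (∫ x, φ (f^[n] x) ∂ν - ∫ x, φ (f^[n] (x.1, x.2.1, 0)) ∂ν)| := by
          rw [e1, e2, e3]; ring_nf
      _ ≤ |∫ x, φ (f^[n] x) ∂μ - ∫ x, φ (f^[n] (x.1, x.2.1, 0)) ∂μ|
            + |∫ x, φ (f^[n] x) ∂ν - ∫ x, φ (f^[n] (x.1, x.2.1, 0)) ∂ν| := abs_sub _ _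
      _ ≤ L * lam ^ n + L * lam ^ n := add_le_add g1 g2
      _ = 2 * L * lam ^ n := by ring
  have htend : Filter.Tendsto (fun n : ℕ => 2 * L * lam ^ n) Filter.atTop (nhds 0) := by
    have := tendsto_pow_atTop_nhds_zero_of_lt_one hlam0 hlam1
    simpa using this.const_mul (2 * L)
  have hle : |∫ x, φ x ∂μ - ∫ x, φ x ∂ν| ≤ 0 :=
    ge_of_tendsto htend (Filter.Eventually.of_forall hbound)
  have := le_antisymm hle (abs_nonneg _)
  rwa [abs_eq_zero, sub_eq_zero] at this

lemma ext_of_lipschitz_integrals (μ ν : Measure (ℝ × ℝ × ℝ))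
    [IsProbabilityMeasure μ] [IsProbabilityMeasure ν]
    (h : ∀ (φ : ℝ × ℝ × ℝ → ℝ) (L C : ℝ), 0 ≤ L →
      (∀ x y, |φ x - φ y| ≤ L * dist x y) → (∀ x, |φ x| ≤ C) → Continuous φ →
      ∫ x, φ x ∂μ = ∫ x, φ x ∂ν) : μ = ν := by
  apply MeasureTheory.ext_of_generate_finite {s : Set (ℝ × ℝ × ℝ) | IsClosed s}
    ?_ isPiSystem_isClosed ?_ (by simp)
  · rw [BorelSpace.measurable_eq (α := ℝ × ℝ × ℝ), borel_eq_generateFrom_isClosed]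
  · rintro F (hF : IsClosed F)
    rcases F.eq_empty_or_nonempty with rfl | hne
    · simp
    set φ : ℕ → ℝ × ℝ × ℝ → ℝ := fun n x => max (1 - n * infDist x F) 0 with hφ
    have hlip : ∀ n : ℕ, ∀ x y, |φ n x - φ n y| ≤ (n : ℝ) * dist x y := by
      intro n x y
      refine (abs_max_sub_max_le_abs _ _ 0).trans ?_
      have : (1 - n * infDist x F) - (1 - n * infDist y F) = n * (infDist y F - infDist x F) := by
        ring
      rw [this, abs_mul, abs_of_nonneg (by positivity : (0:ℝ) ≤ (n:ℝ))]
      apply mul_le_mul_of_nonneg_left _ (by positivity : (0:ℝ) ≤ (n:ℝ))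
      rw [abs_sub_comm, ← Real.dist_eq]
      simpa using (lipschitz_infDist_pt F).dist_le_mul x y
    have hbd : ∀ n x, |φ n x| ≤ 1 := by
      intro n x
      rw [abs_of_nonneg (le_max_right _ _)]
      exact max_le (by nlinarith [infDist_nonneg (x := x) (s := F), Nat.cast_nonneg (α := ℝ) n])
        zero_le_one
    have hcont : ∀ n : ℕ, Continuous (φ n) := fun n =>
      (continuous_const.sub (continuous_const.mul (continuous_infDist_pt F))).max continuous_const
    have hlim : ∀ x, Filter.Tendsto (fun n => φ n x) Filter.atTop
        (nhds (F.indicator (fun _ => (1:ℝ)) x)) := by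
      intro x
      by_cases hx : x ∈ F
      · simp only [hφ, infDist_zero_of_mem hx, Set.indicator_of_mem hx, mul_zero, sub_zero]
        simpa using tendsto_const_nhds
      · have hd : 0 < infDist x F := (hF.notMem_iff_infDist_pos hne).1 hx
        rw [Set.indicator_of_notMem hx]
        apply Filter.Tendsto.congr' _ tendsto_const_nhds
        filter_upwards [Filter.eventually_ge_atTop ⌈(infDist x F)⁻¹⌉₊] with n hn
        have h1 : (infDist x F)⁻¹ ≤ (n : ℝ) := (Nat.le_ceil _).trans (by exact_mod_cast hn)
        have h2 : (1:ℝ) ≤ n * infDist x F := by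
          rw [← inv_mul_cancel₀ hd.ne']
          exact mul_le_mul_of_nonneg_right h1 hd.le
        simp only [hφ]
        rw [max_eq_right (by linarith)]
    have hDCT : ∀ (ρ : Measure (ℝ × ℝ × ℝ)) [IsProbabilityMeasure ρ],
        Filter.Tendsto (fun n => ∫ x, φ n x ∂ρ) Filter.atTop (nhds ((ρ F).toReal)) := by
      intro ρ _
      have := MeasureTheory.tendsto_integral_of_dominated_convergence
        (F := φ) (f := F.indicator (fun _ => (1:ℝ))) (bound := fun _ => (1:ℝ)) (μ := ρ)
        (fun n => (hcont n).aestronglyMeasurable) (integrable_const 1)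
        (fun n => Filter.Eventually.of_forall fun x => by
          simpa [Real.norm_eq_abs] using hbd n x)
        (Filter.Eventually.of_forall hlim)
      have hind : (∫ a, F.indicator (fun _ => (1:ℝ)) a ∂ρ) = (ρ F).toReal :=
        MeasureTheory.integral_indicator_one hF.measurableSet
      rwa [hind] at this
    have heq : ∀ n, ∫ x, φ n x ∂μ = ∫ x, φ n x ∂ν := fun n =>
      h (φ n) n 1 (Nat.cast_nonneg n) (hlip n) (hbd n) (hcont n)
    have := tendsto_nhds_unique ((hDCT μ).congr heq) (hDCT ν)
    exact (ENNReal.toReal_eq_toReal_iff' (measure_ne_top μ F) (measure_ne_top ν F)).1 this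
/-- two `f_{a,b}`-invariant Borel probability measures on `[0,1]³` with
the same pushforward under the projection `p` coincide; i.e. `p_*` is injective on
invariant measures. -/
theorem projection_injective_on_invariant (M : ℕ) (hM : 2 ≤ M) (a b : ℝ)
    (ha : a ∈ Set.Ioo (0 : ℝ) (1 / M)) (hb : b ∈ Set.Ioo (0 : ℝ) (1 / M))
    (μ ν : Measure (ℝ × ℝ × ℝ)) [IsProbabilityMeasure μ] [IsProbabilityMeasure ν]
    (hμcube : μ (Set.Icc 0 1 ×ˢ Set.Icc 0 1 ×ˢ Set.Icc (0:ℝ) 1) = 1)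
    (hνcube : ν (Set.Icc 0 1 ×ˢ Set.Icc 0 1 ×ˢ Set.Icc (0:ℝ) 1) = 1)
    (hμinv : μ.map (fabMap M a b) = μ) (hνinv : ν.map (fabMap M a b) = ν)
    (hproj : μ.map projMap = ν.map projMap) :
    μ = ν := by
  apply ext_of_lipschitz_integrals μ ν
  intro φ L C hL hlip hbd hcont
  exact key_integral M a b hM ha hb μ ν hμcube hνcube hμinv hνinv hproj φ L C hL hlip hbd hcont
end
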